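/- The Ihara action makes the set of group-like series with constant term 1 into a group acting simply transitively on itself: for any G, H in this set, the unique F with F ∘ G = H is again in this set. -/
import Mathlib
/-!
Noncommutative formal power series `R⟨⟨e0,e1⟩⟩` are modeled as coefficient
functions on words: `List (Fin 2) → R` (letter `0` is `e0`, letter `1` is
`e1`).  `cmul` is the Cauchy (concatenation) product, `oneS` the unit series.
-/

variable (R : Type*) [CommRing R] [Algebra ℚ R]

/-- Cauchy product of noncommutative power series. -/
noncomputable def cmul (F G : List (Fin 2) → R) : List (Fin 2) → R :=
  fun w => ∑ i ∈ Finset.range (w.length + 1), F (w.take i) * G (w.drop i)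

/-- The unit series `1`. -/
def oneS : List (Fin 2) → R := fun w => if w = [] then 1 else 0

/-- The series consisting of the single monomial `u`. -/
def wordS (u : List (Fin 2)) : List (Fin 2) → R := fun w => if w = u then 1 else 0

/-- Image of the monomial `u` under the substitution `e0 ↦ e0`, `e1 ↦ X`. -/
noncomputable def monImg (X : List (Fin 2) → R) : List (Fin 2) → (List (Fin 2) → R)
  | [] => oneS R
  | a :: u => cmul R (if a = 1 then X else wordS R [0]) (monImg X u)

/-- The finset of words of length ≤ n over the alphabet {e0,e1}. -/
noncomputable def wordsLe (n : ℕ) : Finset (List (Fin 2)) :=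
  (Finset.range (n + 1)).biUnion fun k =>
    (Finset.univ : Finset (Fin k → Fin 2)).image List.ofFn

/-- Substitution `G(e0, X)` of a series `X` for `e1` in `G` (the coefficient
of a word `w` only involves monomials of `G` of length ≤ |w|, since `X` is
substituted only in positions where it contributes at least one letter when
`X` has no constant term, as is the case for `F e1 F⁻¹`). -/
noncomputable def subst (G X : List (Fin 2) → R) : List (Fin 2) → R :=
  fun w => ∑ u ∈ wordsLe w.length, G u * monImg R X u w

/-- `F e1 F⁻¹`, where `Fi` is the inverse of `F`. -/
noncomputable def conjE1 (F Fi : List (Fin 2) → R) : List (Fin 2) → R :=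
  cmul R (cmul R F (wordS R [1])) Fi

/-- The Ihara composition `F ∘ G = G(e0, F e1 F⁻¹) · F`, where `Fi = F⁻¹`. -/
noncomputable def ihara (F Fi G : List (Fin 2) → R) : List (Fin 2) → R :=
  cmul R (subst R G (conjE1 R F Fi)) F

def sh {α : Type*} : List α → List α → Multiset (List α)
  | [], ys => {ys}
  | x :: xs, [] => {x :: xs}
  | x :: xs, y :: ys =>
      (sh xs (y :: ys)).map (x :: ·) + (sh (x :: xs) ys).map (y :: ·)
termination_by w₁ w₂ => w₁.length + w₂.length

/-- `ΔF = F ⊗̂ F` (coefficientwise, via shuffle duality: the `(u,v)` matrix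
coefficient of `ΔF` is `F` evaluated against `u ш v`) with constant term 1. -/
def IsGroupLike (F : List (Fin 2) → R) : Prop :=
  F [] = 1 ∧ ∀ u v : List (Fin 2), ((sh u v).map F).sum = F u * F v

set_option linter.unusedSectionVars false
set_option linter.unusedVariables false
set_option maxHeartbeats 1000000

open Finset in
/-- Sum of a series over a shuffle multiset. -/
noncomputable def Ssum (f : List (Fin 2) → R) (u v : List (Fin 2)) : R :=
  ((sh u v).map f).sum

lemma sh_nil_left {α : Type*} (v : List α) : sh [] v = {v} := by simp [sh]

lemma sh_nil_right {α : Type*} (u : List α) : sh u [] = {u} := by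
  cases u <;> simp [sh]

lemma mem_sh_length {α : Type*} : ∀ (u v w : List α), w ∈ sh u v →
    w.length = u.length + v.length
  | [], v, w, h => by simp [sh] at h; simp [h]
  | a :: u, [], w, h => by simp [sh] at h; simp [h]
  | a :: u, b :: v, w, h => by
      rw [sh] at h
      simp only [Multiset.mem_add, Multiset.mem_map] at h
      rcases h with ⟨w', hw', rfl⟩ | ⟨w', hw', rfl⟩
      · have := mem_sh_length u (b::v) w' hw'
        simp [this]; omega
      · have := mem_sh_length (a::u) v w' hw'
        simp [this]; omega
  termination_by u v => u.length + v.length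

lemma Ssum_nil_left (f : List (Fin 2) → R) (v : List (Fin 2)) : Ssum R f [] v = f v := by
  simp [Ssum, sh_nil_left]

lemma Ssum_nil_right (f : List (Fin 2) → R) (u : List (Fin 2)) : Ssum R f u [] = f u := by
  simp [Ssum, sh_nil_right]

lemma Ssum_cons_cons (f : List (Fin 2) → R) (a b : Fin 2) (u v : List (Fin 2)) :
    Ssum R f (a::u) (b::v) = Ssum R (fun w => f (a::w)) u (b::v)
      + Ssum R (fun w => f (b::w)) (a::u) v := by
  rw [Ssum, sh]
  simp [Multiset.map_map, Ssum, Function.comp]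

lemma cmul_nil (f g : List (Fin 2) → R) : cmul R f g [] = f [] * g [] := by
  simp [cmul]

lemma cmul_cons (f g : List (Fin 2) → R) (a : Fin 2) (w : List (Fin 2)) :
    cmul R f g (a::w) = f [] * g (a::w) + cmul R (fun s => f (a::s)) g w := by
  rw [cmul, Finset.sum_range_succ']
  simp only [List.take_succ_cons, List.drop_succ_cons, List.take_zero, List.drop_zero]
  rw [add_comm]
  rfl

lemma cmul_oneS_right (f : List (Fin 2) → R) (w : List (Fin 2)) :
    cmul R f (oneS R) w = f w := by
  rw [cmul]
  rw [Finset.sum_eq_single w.length]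
  · simp [oneS]
  · intro i hi hne
    have : w.drop i ≠ [] := by
      simp only [Finset.mem_range] at hi
      intro h
      rw [List.drop_eq_nil_iff] at h
      omega
    simp [oneS, this]
  · simp

/-- Collapse a sum against `oneS (take j v)`: only `j = 0` survives. -/
lemma sum_oneS_take (v : List (Fin 2)) (C : ℕ → R) :
    ∑ j ∈ Finset.range (v.length + 1), oneS R (v.take j) * C j = C 0 := by
  rw [Finset.sum_eq_single 0]
  · simp [oneS]
  · intro j hj hne
    have : v.take j ≠ [] := by
      simp only [Finset.mem_range] at hj
      intro h
      rw [List.take_eq_nil_iff] at h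
      rcases h with h | h
      · exact hne h
      · subst h; simp at hj; omega
    simp [oneS, this]
  · simp

/-- Swap a finset sum and a multiset sum. -/
lemma swap_ms {ι α : Type*} (s : Finset ι) (m : Multiset α) (f : ι → α → R) :
    ∑ i ∈ s, (m.map (f i)).sum = (m.map (fun a => ∑ i ∈ s, f i a)).sum := by
  induction m using Multiset.induction with
  | empty => simp
  | cons a m ih => simp [Finset.sum_add_distrib, ih]

/-- Extraction helper: two doubly-indexed sums agreeing away from `(0,0)`
with equal totals agree at `(0,0)`. -/
lemma extract00 (m n : ℕ) (T T' : ℕ → ℕ → R)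
    (h : ∀ i ∈ Finset.range (m+1), ∀ j ∈ Finset.range (n+1), ¬(i = 0 ∧ j = 0) → T i j = T' i j)
    (hsum : ∑ i ∈ Finset.range (m+1), ∑ j ∈ Finset.range (n+1), T i j
          = ∑ i ∈ Finset.range (m+1), ∑ j ∈ Finset.range (n+1), T' i j) :
    T 0 0 = T' 0 0 := by
  have key : ∑ i ∈ Finset.range (m+1), ∑ j ∈ Finset.range (n+1), (T i j - T' i j)
      = T 0 0 - T' 0 0 := by
    rw [Finset.sum_eq_single_of_mem 0 (by simp)]
    · rw [Finset.sum_eq_single_of_mem 0 (by simp)]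
      intro j hj hne
      rw [h 0 (by simp) j hj (by tauto)]; ring
    · intro i hi hne
      apply Finset.sum_eq_zero
      intro j hj
      rw [h i hi j hj (by tauto)]; ring
  have : ∑ i ∈ Finset.range (m+1), ∑ j ∈ Finset.range (n+1), (T i j - T' i j) = 0 := by
    simp only [Finset.sum_sub_distrib]
    rw [hsum]; ring
  rw [this] at key
  exact sub_eq_zero.mp key.symm

lemma Ssum_add (p q : List (Fin 2) → R) (u v : List (Fin 2)) :
    Ssum R (fun w => p w + q w) u v = Ssum R p u v + Ssum R q u v := by
  simp [Ssum, Multiset.sum_map_add]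
lemma Ssum_mul_left (c : R) (p : List (Fin 2) → R) (u v : List (Fin 2)) :
    Ssum R (fun w => c * p w) u v = c * Ssum R p u v := by
  simp [Ssum, Multiset.sum_map_mul_left]

theorem splitLemma : ∀ (u v : List (Fin 2)) (f g : List (Fin 2) → R),
    Ssum R (cmul R f g) u v =
      ∑ i ∈ Finset.range (u.length + 1), ∑ j ∈ Finset.range (v.length + 1),
        Ssum R f (u.take i) (v.take j) * Ssum R g (u.drop i) (v.drop j)
  | [], v, f, g => by
      simp only [List.length_nil, Finset.range_one, Finset.sum_singleton,
        List.take_nil, List.drop_nil, Ssum_nil_left]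
      simp [cmul]
  | a :: u', [], f, g => by
      simp only [List.length_nil, Finset.range_one, Finset.sum_singleton,
        List.take_nil, List.drop_nil, Ssum_nil_right]
      simp [cmul]
  | a :: u', b :: v', f, g => by
      have IH1 := splitLemma u' (b :: v') (fun w => f (a::w)) g
      have IH2 := splitLemma (a :: u') v' (fun w => f (b::w)) g
      -- row lemma
      have Hrow : ∀ (p P : List (Fin 2)),
          (∑ j ∈ Finset.range ((b::v').length + 1),
            Ssum R f (a::p) ((b::v').take j) * Ssum R g P ((b::v').drop j))
          = (∑ j ∈ Finset.range ((b::v').length + 1),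
              Ssum R (fun w => f (a::w)) p ((b::v').take j) * Ssum R g P ((b::v').drop j))
            + ∑ j ∈ Finset.range (v'.length + 1),
              Ssum R (fun w => f (b::w)) (a::p) (v'.take j) * Ssum R g P (v'.drop j) := by
        intro p P
        rw [show (b::v').length + 1 = v'.length + 1 + 1 from rfl]
        rw [Finset.sum_range_succ' _ (v'.length + 1), Finset.sum_range_succ' _ (v'.length + 1)]
        simp only [List.take_succ_cons, List.drop_succ_cons, List.take_zero, List.drop_zero,
          Ssum_cons_cons, Ssum_nil_right, add_mul, Finset.sum_add_distrib]
        ring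
      -- decompose LHS
      rw [Ssum_cons_cons]
      have e1 : (fun w => cmul R f g (a::w))
          = fun w => f [] * g (a::w) + cmul R (fun s => f (a::s)) g w :=
        funext fun w => cmul_cons R f g a w
      have e2 : (fun w => cmul R f g (b::w))
          = fun w => f [] * g (b::w) + cmul R (fun s => f (b::s)) g w :=
        funext fun w => cmul_cons R f g b w
      rw [show Ssum R (fun w => cmul R f g (a::w)) u' (b::v')
            = Ssum R (fun w => f [] * g (a::w) + cmul R (fun s => f (a::s)) g w) u' (b::v')
          from by rw [e1]]
      rw [show Ssum R (fun w => cmul R f g (b::w)) (a::u') v'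
            = Ssum R (fun w => f [] * g (b::w) + cmul R (fun s => f (b::s)) g w) (a::u') v'
          from by rw [e2]]
      rw [Ssum_add, Ssum_add, Ssum_mul_left, Ssum_mul_left, IH1, IH2]
      -- decompose RHS
      conv_rhs => rw [show (a::u').length + 1 = u'.length + 1 + 1 from rfl,
        Finset.sum_range_succ' _ (u'.length + 1)]
      simp only [List.take_succ_cons, List.drop_succ_cons, List.take_zero, List.drop_zero]
      conv_rhs => rw [Finset.sum_congr rfl (fun i (hi : i ∈ Finset.range (u'.length + 1)) =>
        Hrow (u'.take i) (u'.drop i))]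
      rw [Finset.sum_add_distrib]
      -- the i = 0 row of RHS
      conv_rhs => rw [show (∑ j ∈ Finset.range ((b::v').length + 1),
            Ssum R f [] ((b::v').take j) * Ssum R g (a::u') ((b::v').drop j))
          = (∑ j ∈ Finset.range (v'.length + 1),
              f (b::(v'.take j)) * Ssum R g (a::u') (v'.drop j))
            + f [] * Ssum R g (a::u') (b::v') from by
          rw [show (b::v').length + 1 = v'.length + 1 + 1 from rfl,
            Finset.sum_range_succ' _ (v'.length + 1)]
          simp only [List.take_succ_cons, List.drop_succ_cons, List.take_zero, List.drop_zero,
            Ssum_nil_left]]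
      -- the f_b block of RHS side of IH2
      conv_lhs => rw [show (a::u').length + 1 = u'.length + 1 + 1 from rfl,
        Finset.sum_range_succ' _ (u'.length + 1)]
      simp only [List.take_succ_cons, List.drop_succ_cons, List.take_zero, List.drop_zero,
        Ssum_nil_left, Ssum_cons_cons]
      ring
  termination_by u v => u.length + v.length

lemma Ssum_oneS (u v : List (Fin 2)) : Ssum R (oneS R) u v = oneS R u * oneS R v := by
  rcases u with _ | ⟨a, u'⟩
  · simp [Ssum_nil_left, oneS]
  · rcases v with _ | ⟨b, v'⟩
    · simp [Ssum_nil_right, oneS]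
    · have : ∀ w ∈ sh (a::u') (b::v'), oneS R w = 0 := by
        intro w hw
        have hl := mem_sh_length (a::u') (b::v') w hw
        have : w ≠ [] := by intro h; subst h; simp at hl
        simp [oneS, this]
      rw [Ssum, Multiset.sum_eq_zero]
      · simp [oneS]
      · intro x hx
        rcases Multiset.mem_map.mp hx with ⟨w, hw, rfl⟩
        exact this w hw
/-- single letters are primitive -/
lemma wordS_prim (c : Fin 2) (u v : List (Fin 2)) :
    Ssum R (wordS R [c]) u v = wordS R [c] u * oneS R v + oneS R u * wordS R [c] v := by
  rcases u with _ | ⟨a, u'⟩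
  · simp [Ssum_nil_left, oneS, wordS]
  · rcases v with _ | ⟨b, v'⟩
    · simp [Ssum_nil_right, oneS, wordS]
    · have : ∀ w ∈ sh (a::u') (b::v'), wordS R [c] w = 0 := by
        intro w hw
        have hl := mem_sh_length (a::u') (b::v') w hw
        have : w ≠ [c] := by intro h; subst h; simp at hl; omega
        simp [wordS, this]
      rw [Ssum, Multiset.sum_eq_zero]
      · simp [oneS, wordS]
      · intro x hx
        rcases Multiset.mem_map.mp hx with ⟨w, hw, rfl⟩
        exact this w hw

/-- the (pointwise, filtered) inverse of a character is a character -/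
lemma charInv (N : ℕ) (F Fi : List (Fin 2) → R) (hF1 : F [] = 1)
    (hchar : ∀ u v : List (Fin 2), u.length + v.length ≤ N → Ssum R F u v = F u * F v)
    (hFi : cmul R F Fi = oneS R) :
    (Fi [] = 1) ∧ ∀ u v : List (Fin 2), u.length + v.length ≤ N →
      Ssum R Fi u v = Fi u * Fi v := by
  have hFi0 : Fi [] = 1 := by
    have := congrFun hFi []
    rw [cmul_nil, hF1, one_mul] at this
    simpa [oneS] using this
  refine ⟨hFi0, ?_⟩
  -- strong induction on total length
  suffices h : ∀ n, ∀ u v : List (Fin 2), u.length + v.length = n →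
      u.length + v.length ≤ N → Ssum R Fi u v = Fi u * Fi v by
    intro u v hn; exact h _ u v rfl hn
  intro n
  induction n using Nat.strong_induction_on with
  | _ n IH =>
    intro u v hn hN
    have key := splitLemma R u v F Fi
    rw [show cmul R F Fi = oneS R from hFi, Ssum_oneS] at key
    -- rewrite the characters
    have key2 : oneS R u * oneS R v
        = ∑ i ∈ Finset.range (u.length + 1), ∑ j ∈ Finset.range (v.length + 1),
          (F (u.take i) * F (v.take j)) * Ssum R Fi (u.drop i) (v.drop j) := by
      rw [key]
      refine Finset.sum_congr rfl fun i hi => Finset.sum_congr rfl fun j hj => ?_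
      rw [hchar (u.take i) (v.take j) ?_]
      simp only [Finset.mem_range] at hi hj
      calc (u.take i).length + (v.take j).length ≤ u.length + v.length := by
            simp [List.length_take]; omega
        _ ≤ N := hN
    -- the full product expansion
    have key3 : oneS R u * oneS R v
        = ∑ i ∈ Finset.range (u.length + 1), ∑ j ∈ Finset.range (v.length + 1),
          (F (u.take i) * F (v.take j)) * (Fi (u.drop i) * Fi (v.drop j)) := by
      have : oneS R u * oneS R v = (cmul R F Fi u) * (cmul R F Fi v) := by rw [hFi]
      rw [this, cmul, cmul, Finset.sum_mul_sum]
      refine Finset.sum_congr rfl fun i hi => Finset.sum_congr rfl fun j hj => by ring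
    have h00 := extract00 R u.length v.length _ _ ?_ (key2.symm.trans key3)
    · simpa [hF1] using h00
    · intro i hi j hj hne
      simp only [Finset.mem_range] at hi hj
      congr 1
      apply IH ((u.drop i).length + (v.drop j).length) ?_ _ _ rfl ?_
      · subst hn; simp [List.length_drop]; omega
      · simp [List.length_drop]; omega

lemma four_factor (m n : ℕ) (r s : ℕ → ℕ) (a b : ℕ → ℕ → R) :
    ∑ i ∈ Finset.range (m+1), ∑ j ∈ Finset.range (n+1),
      ∑ i' ∈ Finset.range (r i + 1), ∑ j' ∈ Finset.range (s j + 1), a i i' * b j j'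
    = (∑ i ∈ Finset.range (m+1), ∑ i' ∈ Finset.range (r i + 1), a i i')
      * (∑ j ∈ Finset.range (n+1), ∑ j' ∈ Finset.range (s j + 1), b j j') := by
  rw [Finset.sum_mul]
  refine Finset.sum_congr rfl fun i hi => ?_
  rw [Finset.sum_mul, Finset.sum_comm]
  refine Finset.sum_congr rfl fun i' _ => ?_
  rw [Finset.mul_sum]
  refine Finset.sum_congr rfl fun j _ => ?_
  rw [Finset.mul_sum]

lemma primConj (N : ℕ) (A B P : List (Fin 2) → R)
    (hAchar : ∀ u v : List (Fin 2), u.length + v.length ≤ N → Ssum R A u v = A u * A v)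
    (hBchar : ∀ u v : List (Fin 2), u.length + v.length ≤ N → Ssum R B u v = B u * B v)
    (hAB : cmul R A B = oneS R) (hP0 : P [] = 0)
    (hP : ∀ a b : List (Fin 2), Ssum R P a b = P a * oneS R b + oneS R a * P b) :
    ∀ u v : List (Fin 2), u.length + v.length ≤ N + 1 →
      Ssum R (cmul R (cmul R A P) B) u v
        = cmul R (cmul R A P) B u * oneS R v + oneS R u * cmul R (cmul R A P) B v := by
  intro u v hN
  rw [splitLemma]
  have step1 : ∀ i ∈ Finset.range (u.length + 1), ∀ j ∈ Finset.range (v.length + 1),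
      Ssum R (cmul R A P) (u.take i) (v.take j) * Ssum R B (u.drop i) (v.drop j)
      = ∑ i' ∈ Finset.range ((u.take i).length + 1), ∑ j' ∈ Finset.range ((v.take j).length + 1),
          (((A ((u.take i).take i') * P ((u.take i).drop i')) * B (u.drop i))
            * ((A ((v.take j).take j') * oneS R ((v.take j).drop j')) * B (v.drop j))
          + ((A ((u.take i).take i') * oneS R ((u.take i).drop i')) * B (u.drop i))
            * ((A ((v.take j).take j') * P ((v.take j).drop j')) * B (v.drop j))) := by
    intro i hi j hj
    simp only [Finset.mem_range] at hi hj
    rw [splitLemma, Finset.sum_mul]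
    refine Finset.sum_congr rfl fun i' hi' => ?_
    rw [Finset.sum_mul]
    refine Finset.sum_congr rfl fun j' hj' => ?_
    simp only [Finset.mem_range] at hi' hj'
    by_cases hmid : (u.take i).drop i' = [] ∧ (v.take j).drop j' = []
    · rw [hmid.1, hmid.2]
      rw [show Ssum R P [] [] = P [] from Ssum_nil_left R P []]
      rw [hP0]
      ring
    · -- degree bookkeeping
      have lu : (u.take i).length ≤ u.length := by simp [List.length_take]
      have lv : (v.take j).length ≤ v.length := by simp [List.length_take]
      have l1 : ((u.take i).take i').length + ((u.take i).drop i').length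
          = (u.take i).length := by simp [List.length_take, List.length_drop]; omega
      have l2 : ((v.take j).take j').length + ((v.take j).drop j').length
          = (v.take j).length := by simp [List.length_take, List.length_drop]; omega
      have hpos : 1 ≤ ((u.take i).drop i').length + ((v.take j).drop j').length := by
        rcases not_and_or.mp hmid with h | h
        · have : (u.take i).drop i' ≠ [] := h
          have := List.length_pos_iff.mpr this
          omega
        · have : (v.take j).drop j' ≠ [] := h
          have := List.length_pos_iff.mpr this
          omega
      have t1 : (u.take i).length + (u.drop i).length = u.length := by
        simp [List.length_take, List.length_drop]; omega
      have t2 : (v.take j).length + (v.drop j).length = v.length := by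
        simp [List.length_take, List.length_drop]; omega
      rw [hAchar _ _ (by omega), hP _ _, hBchar _ _ (by omega)]
      ring
  rw [Finset.sum_congr rfl (fun i hi => Finset.sum_congr rfl (fun j hj => step1 i hi j hj))]
  simp only [Finset.sum_add_distrib]
  rw [four_factor R u.length v.length (fun i => (u.take i).length) (fun j => (v.take j).length)]
  rw [four_factor R u.length v.length (fun i => (u.take i).length) (fun j => (v.take j).length)]
  have fac1 : (∑ i ∈ Finset.range (u.length + 1), ∑ i' ∈ Finset.range ((u.take i).length + 1),
      (A ((u.take i).take i') * P ((u.take i).drop i')) * B (u.drop i))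
      = cmul R (cmul R A P) B u := by
    rw [cmul]
    refine Finset.sum_congr rfl fun i hi => ?_
    rw [← Finset.sum_mul, cmul]
  have fac2 : ∀ (w : List (Fin 2)), (∑ j ∈ Finset.range (w.length + 1),
      ∑ j' ∈ Finset.range ((w.take j).length + 1),
      (A ((w.take j).take j') * oneS R ((w.take j).drop j')) * B (w.drop j))
      = oneS R w := by
    intro w
    calc (∑ j ∈ Finset.range (w.length + 1), ∑ j' ∈ Finset.range ((w.take j).length + 1),
        (A ((w.take j).take j') * oneS R ((w.take j).drop j')) * B (w.drop j))
        = ∑ j ∈ Finset.range (w.length + 1), A (w.take j) * B (w.drop j) := by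
          refine Finset.sum_congr rfl fun j hj => ?_
          have : ∑ j' ∈ Finset.range ((w.take j).length + 1),
              A ((w.take j).take j') * oneS R ((w.take j).drop j') = A (w.take j) := by
            rw [← cmul_oneS_right R A (w.take j)]; rfl
          rw [← Finset.sum_mul, this]
      _ = cmul R A B w := rfl
      _ = oneS R w := by rw [hAB]
  rw [fac1, fac2 v, fac2 u]
  have fac3 : (∑ j ∈ Finset.range (v.length + 1), ∑ j' ∈ Finset.range ((v.take j).length + 1),
      A ((v.take j).take j') * P ((v.take j).drop j') * B (v.drop j))
      = cmul R (cmul R A P) B v := by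
    conv_rhs => rw [cmul]
    refine Finset.sum_congr rfl fun j hj => ?_
    rw [← Finset.sum_mul]
    rfl
  rw [fac3]


/-- Deconcatenation-type coproduct dual to `sh`. -/
def dec {α : Type*} : List α → Multiset (List α × List α)
  | [] => {([], [])}
  | a :: t => ((dec t).map fun pq => (a::pq.1, pq.2)) + ((dec t).map fun pq => (pq.1, a::pq.2))

lemma dec_len {α : Type*} : ∀ (t : List α) (pq : List α × List α), pq ∈ dec t →
    pq.1.length + pq.2.length = t.length := by
  intro t
  induction t with
  | nil => intro pq hpq; simp [dec] at hpq; simp [hpq]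
  | cons a t IH =>
    intro pq hpq
    simp only [dec, Multiset.mem_add, Multiset.mem_map] at hpq
    rcases hpq with ⟨pq', h', rfl⟩ | ⟨pq', h', rfl⟩ <;>
      · have := IH pq' h'
        simp at this ⊢
        omega

section counts
variable {α : Type*} [DecidableEq α]

lemma count_map_fst (a : α) (m : Multiset (List α × List α)) (p q : List α) :
    (m.map fun pq => (a::pq.1, pq.2)).count (a::p, q) = m.count (p, q) :=
  Multiset.count_map_eq_count' _ m
    (fun x y h => by
      simp only [Prod.mk.injEq, List.cons.injEq] at h
      exact Prod.ext h.1.2 h.2) (p, q)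

lemma count_map_fst_ne (a : α) (m : Multiset (List α × List α)) (p q : List α)
    (h : ∀ p', p ≠ a :: p') : (m.map fun pq => (a::pq.1, pq.2)).count (p, q) = 0 := by
  rw [Multiset.count_eq_zero]
  intro hm
  rcases Multiset.mem_map.mp hm with ⟨pq, _, heq⟩
  exact h pq.1 (by have := heq.symm; simp only [Prod.mk.injEq] at this; exact this.1)

lemma count_map_snd (a : α) (m : Multiset (List α × List α)) (p q : List α) :
    (m.map fun pq => (pq.1, a::pq.2)).count (p, a::q) = m.count (p, q) :=
  Multiset.count_map_eq_count' _ m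
    (fun x y h => by
      simp only [Prod.mk.injEq, List.cons.injEq] at h
      exact Prod.ext h.1 h.2.2) (p, q)

lemma count_map_snd_ne (a : α) (m : Multiset (List α × List α)) (p q : List α)
    (h : ∀ q', q ≠ a :: q') : (m.map fun pq => (pq.1, a::pq.2)).count (p, q) = 0 := by
  rw [Multiset.count_eq_zero]
  intro hm
  rcases Multiset.mem_map.mp hm with ⟨pq, _, heq⟩
  exact h pq.2 (by have := heq.symm; simp only [Prod.mk.injEq] at this; exact this.2)

lemma count_cons_map (c : α) (m : Multiset (List α)) (w : List α) :
    ((m.map (c :: ·)).count (c::w)) = m.count w :=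
  Multiset.count_map_eq_count' _ m (fun x y h => by simpa using h) w

lemma count_cons_map_ne (c : α) (m : Multiset (List α)) (w : List α)
    (h : ∀ w', w ≠ c :: w') : ((m.map (c :: ·)).count w) = 0 := by
  rw [Multiset.count_eq_zero]
  intro hm
  rcases Multiset.mem_map.mp hm with ⟨w', _, heq⟩
  exact h w' (by rw [← heq])

lemma dec_count (t : List α) : ∀ (p q : List α), (dec t).count (p, q) = (sh p q).count t := by
  induction t with
  | nil =>
    intro p q
    simp only [dec]
    rcases p with _ | ⟨x, p'⟩
    · rcases q with _ | ⟨y, q'⟩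
      · simp [sh]
      · simp [sh_nil_left]
    · rw [Multiset.count_singleton, if_neg (by simp)]
      symm
      rw [Multiset.count_eq_zero]
      intro hmem
      have := mem_sh_length (x::p') q [] hmem
      simp at this
      omega
  | cons a t IH =>
    intro p q
    simp only [dec, Multiset.count_add]
    rcases p with _ | ⟨x, p'⟩
    · rw [count_map_fst_ne a _ _ _ (by simp)]
      rcases q with _ | ⟨y, q'⟩
      · rw [count_map_snd_ne a _ _ _ (by simp), sh_nil_left]
        simp
      · rw [sh_nil_left, zero_add]
        by_cases hy : y = a
        · subst hy
          rw [count_map_snd, IH, sh_nil_left]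
          rw [Multiset.count_singleton, Multiset.count_singleton]
          simp [List.cons.injEq]
        · rw [count_map_snd_ne a _ _ _ (by intro q' h; exact hy (List.cons.injEq .. |>.mp h).1)]
          rw [Multiset.count_singleton, if_neg (by intro h; exact hy ((List.cons.injEq ..).mp h.symm).1)]
    · rcases q with _ | ⟨y, q'⟩
      · rw [count_map_snd_ne a _ _ _ (by simp), sh_nil_right, add_zero]
        by_cases hx : x = a
        · subst hx
          rw [count_map_fst, IH, sh_nil_right]
          rw [Multiset.count_singleton, Multiset.count_singleton]
          simp [List.cons.injEq]
        · rw [count_map_fst_ne a _ _ _ (by intro p' h; exact hx ((List.cons.injEq ..).mp h).1)]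
          rw [Multiset.count_singleton, if_neg (by intro h; exact hx ((List.cons.injEq ..).mp h.symm).1)]
      · rw [sh, Multiset.count_add]
        congr 1
        · by_cases hx : x = a
          · subst hx
            rw [count_map_fst, IH, count_cons_map]
          · rw [count_map_fst_ne a _ _ _ (by intro p' h; exact hx ((List.cons.injEq ..).mp h).1)]
            rw [count_cons_map_ne _ _ _ (by intro w' h; exact hx ((List.cons.injEq ..).mp h).1.symm)]
        · by_cases hy : y = a
          · subst hy
            rw [count_map_snd, IH, count_cons_map]
          · rw [count_map_snd_ne a _ _ _ (by intro q' h; exact hy ((List.cons.injEq ..).mp h).1)]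
            rw [count_cons_map_ne _ _ _ (by intro w' h; exact hy ((List.cons.injEq ..).mp h).1.symm)]

end counts

lemma mem_wordsLe (n : ℕ) (w : List (Fin 2)) : w ∈ wordsLe n ↔ w.length ≤ n := by
  simp only [wordsLe, Finset.mem_biUnion, Finset.mem_range, Finset.mem_image, Finset.mem_univ,
    true_and]
  constructor
  · rintro ⟨k, hk, f, rfl⟩
    simp only [List.length_ofFn]
    omega
  · intro h
    exact ⟨w.length, by omega, fun i => w.get i, List.ofFn_get w⟩

lemma wordsLe_zero : wordsLe 0 = {[]} := by
  ext w
  rw [mem_wordsLe]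
  simp [List.length_eq_zero_iff]

lemma monImg_vanish (X : List (Fin 2) → R) (hX0 : X [] = 0) :
    ∀ (t w : List (Fin 2)), w.length < t.length → monImg R X t w = 0 := by
  intro t
  induction t with
  | nil => intro w h; simp at h
  | cons a t IH =>
    intro w h
    show cmul R _ (monImg R X t) w = 0
    rw [cmul]
    apply Finset.sum_eq_zero
    intro i hi
    simp only [Finset.mem_range] at hi
    rcases Nat.eq_zero_or_pos i with rfl | hpos
    · simp only [List.take_zero]
      have : (if a = 1 then X else wordS R [0]) [] = 0 := by
        split_ifs
        · exact hX0
        · simp [wordS]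
      rw [this, zero_mul]
    · rw [IH (w.drop i) (by simp only [List.length_drop]; simp at h; omega), mul_zero]

lemma coalg (N : ℕ) (X : List (Fin 2) → R) (hX0 : X [] = 0)
    (hX : ∀ a b : List (Fin 2), a.length + b.length ≤ N →
      Ssum R X a b = X a * oneS R b + oneS R a * X b) :
    ∀ (t u v : List (Fin 2)), u.length + v.length ≤ N →
      Ssum R (monImg R X t) u v
        = ((dec t).map fun pq => monImg R X pq.1 u * monImg R X pq.2 v).sum := by
  intro t
  induction t with
  | nil =>
    intro u v hN
    show Ssum R (oneS R) u v = _
    rw [Ssum_oneS]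
    simp [dec, monImg]
  | cons a t IH =>
    intro u v hN
    set Y : List (Fin 2) → R := if a = 1 then X else wordS R [0] with hYdef
    have hY : ∀ p q : List (Fin 2), p.length + q.length ≤ N →
        Ssum R Y p q = Y p * oneS R q + oneS R p * Y q := by
      intro p q hpq
      rw [hYdef]
      split_ifs with ha
      · exact hX p q hpq
      · exact wordS_prim R 0 p q
    show Ssum R (cmul R Y (monImg R X t)) u v = _
    rw [splitLemma]
    have step : ∀ i ∈ Finset.range (u.length + 1), ∀ j ∈ Finset.range (v.length + 1),
        Ssum R Y (u.take i) (v.take j) * Ssum R (monImg R X t) (u.drop i) (v.drop j)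
        = oneS R (v.take j) * (Y (u.take i) *
            ((dec t).map fun pq => monImg R X pq.1 (u.drop i) * monImg R X pq.2 (v.drop j)).sum)
          + oneS R (u.take i) * (Y (v.take j) *
            ((dec t).map fun pq => monImg R X pq.1 (u.drop i) * monImg R X pq.2 (v.drop j)).sum) := by
      intro i hi j hj
      simp only [Finset.mem_range] at hi hj
      have d1 : (u.take i).length + (v.take j).length ≤ N := by
        simp only [List.length_take]
        omega
      have d2 : (u.drop i).length + (v.drop j).length ≤ N := by
        simp only [List.length_drop]
        omega
      rw [hY _ _ d1, IH (u.drop i) (v.drop j) d2]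
      ring
    rw [Finset.sum_congr rfl fun i hi => Finset.sum_congr rfl fun j hj => step i hi j hj]
    simp only [Finset.sum_add_distrib]
    -- first block: collapse the j-sum at j = 0
    have blk1 : ∀ i ∈ Finset.range (u.length + 1),
        (∑ j ∈ Finset.range (v.length + 1), oneS R (v.take j) * (Y (u.take i) *
          ((dec t).map fun pq => monImg R X pq.1 (u.drop i) * monImg R X pq.2 (v.drop j)).sum))
        = Y (u.take i) *
          ((dec t).map fun pq => monImg R X pq.1 (u.drop i) * monImg R X pq.2 v).sum := by
      intro i hi
      rw [sum_oneS_take]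
      rw [List.drop_zero]
    rw [Finset.sum_congr rfl blk1]
    -- second block: swap sums, collapse the i-sum at i = 0
    have blk2 : (∑ i ∈ Finset.range (u.length + 1), ∑ j ∈ Finset.range (v.length + 1),
        oneS R (u.take i) * (Y (v.take j) *
          ((dec t).map fun pq => monImg R X pq.1 (u.drop i) * monImg R X pq.2 (v.drop j)).sum))
        = ∑ j ∈ Finset.range (v.length + 1), Y (v.take j) *
          ((dec t).map fun pq => monImg R X pq.1 u * monImg R X pq.2 (v.drop j)).sum := by
      rw [Finset.sum_comm]
      refine Finset.sum_congr rfl fun j hj => ?_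
      rw [sum_oneS_take]
      rw [List.drop_zero]
    rw [blk2]
    -- now convert both blocks into multiset sums over `dec t`
    have blk1' : (∑ i ∈ Finset.range (u.length + 1), Y (u.take i) *
          ((dec t).map fun pq => monImg R X pq.1 (u.drop i) * monImg R X pq.2 v).sum)
        = ((dec t).map fun pq => cmul R Y (monImg R X pq.1) u * monImg R X pq.2 v).sum := by
      have e : ∀ i, Y (u.take i) *
          ((dec t).map fun pq => monImg R X pq.1 (u.drop i) * monImg R X pq.2 v).sum
          = ((dec t).map fun pq =>
              Y (u.take i) * (monImg R X pq.1 (u.drop i) * monImg R X pq.2 v)).sum := by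
        intro i
        rw [← Multiset.sum_map_mul_left]
      rw [Finset.sum_congr rfl fun i _ => e i, swap_ms]
      congr 1
      apply Multiset.map_congr rfl
      intro pq _
      rw [cmul, Finset.sum_mul]
      refine Finset.sum_congr rfl fun i _ => by ring
    have blk2' : (∑ j ∈ Finset.range (v.length + 1), Y (v.take j) *
          ((dec t).map fun pq => monImg R X pq.1 u * monImg R X pq.2 (v.drop j)).sum)
        = ((dec t).map fun pq => monImg R X pq.1 u * cmul R Y (monImg R X pq.2) v).sum := by
      have e : ∀ j, Y (v.take j) *
          ((dec t).map fun pq => monImg R X pq.1 u * monImg R X pq.2 (v.drop j)).sum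
          = ((dec t).map fun pq =>
              Y (v.take j) * (monImg R X pq.1 u * monImg R X pq.2 (v.drop j))).sum := by
        intro j
        rw [← Multiset.sum_map_mul_left]
      rw [Finset.sum_congr rfl fun j _ => e j, swap_ms]
      congr 1
      apply Multiset.map_congr rfl
      intro pq _
      rw [cmul, Finset.mul_sum]
      refine Finset.sum_congr rfl fun j _ => by ring
    rw [blk1', blk2']
    -- and match with the right-hand side
    show _ = ((dec (a::t)).map fun pq => monImg R X pq.1 u * monImg R X pq.2 v).sum
    rw [show dec (a::t) = ((dec t).map fun pq => (a::pq.1, pq.2))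
        + ((dec t).map fun pq => (pq.1, a::pq.2)) from rfl]
    rw [Multiset.map_add, Multiset.sum_add, Multiset.map_map, Multiset.map_map]
    rfl

lemma subst_nil (G X : List (Fin 2) → R) (hG1 : G [] = 1) : subst R G X [] = 1 := by
  show ∑ t ∈ wordsLe (List.length ([] : List (Fin 2))), G t * monImg R X t [] = 1
  rw [show List.length ([] : List (Fin 2)) = 0 from rfl, wordsLe_zero, Finset.sum_singleton]
  show G [] * oneS R [] = 1
  simp [oneS, hG1]

lemma substChar (N : ℕ) (G X : List (Fin 2) → R) (hG : IsGroupLike R G) (hX0 : X [] = 0)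
    (hX : ∀ a b : List (Fin 2), a.length + b.length ≤ N →
      Ssum R X a b = X a * oneS R b + oneS R a * X b) :
    ∀ u v : List (Fin 2), u.length + v.length ≤ N →
      Ssum R (subst R G X) u v = subst R G X u * subst R G X v := by
  intro u v hN
  have step12 : Ssum R (subst R G X) u v
      = ∑ t ∈ wordsLe (u.length + v.length), G t *
          ((dec t).map fun pq => monImg R X pq.1 u * monImg R X pq.2 v).sum := by
    have e0 : ((sh u v).map (subst R G X)).sum
        = ((sh u v).map (fun w => ∑ t ∈ wordsLe (u.length + v.length),
            G t * monImg R X t w)).sum := by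
      congr 1
      apply Multiset.map_congr rfl
      intro w hw
      have hlw : w.length = u.length + v.length := mem_sh_length u v w hw
      show (∑ t ∈ wordsLe w.length, G t * monImg R X t w) = _
      rw [hlw]
    rw [Ssum, e0, ← swap_ms]
    refine Finset.sum_congr rfl fun t ht => ?_
    rw [Multiset.sum_map_mul_left]
    congr 1
    exact coalg R N X hX0 hX t u v hN
  rw [step12]
  have conv1 : ∀ t ∈ wordsLe (u.length + v.length),
      G t * ((dec t).map fun pq => monImg R X pq.1 u * monImg R X pq.2 v).sum
      = G t * ∑ pq ∈ wordsLe (u.length + v.length) ×ˢ wordsLe (u.length + v.length),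
          ((dec t).count pq) • (monImg R X pq.1 u * monImg R X pq.2 v) := by
    intro t ht
    congr 1
    rw [Finset.sum_multiset_map_count]
    apply Finset.sum_subset
    · intro pq hpq
      rw [Multiset.mem_toFinset] at hpq
      have hl := dec_len t pq hpq
      have ht' := (mem_wordsLe _ t).mp ht
      rw [Finset.mem_product]
      constructor <;> rw [mem_wordsLe] <;> omega
    · intro pq _ hpq
      rw [Multiset.count_eq_zero.mpr (fun h => hpq (Multiset.mem_toFinset.mpr h)), zero_smul]
  rw [Finset.sum_congr rfl conv1]
  rw [Finset.sum_congr rfl (fun t _ => Finset.mul_sum _ _ _)]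
  rw [Finset.sum_comm]
  have swap2 : ∀ pq ∈ wordsLe (u.length + v.length) ×ˢ wordsLe (u.length + v.length),
      (∑ t ∈ wordsLe (u.length + v.length),
        G t * (((dec t).count pq) • (monImg R X pq.1 u * monImg R X pq.2 v)))
      = (∑ t ∈ wordsLe (u.length + v.length), ((dec t).count pq) • G t)
          * (monImg R X pq.1 u * monImg R X pq.2 v) := by
    intro pq _
    rw [Finset.sum_mul]
    refine Finset.sum_congr rfl fun t _ => ?_
    rw [mul_smul_comm, smul_mul_assoc]
  rw [Finset.sum_congr rfl swap2]
  have conv2 : ∀ pq ∈ wordsLe (u.length + v.length) ×ˢ wordsLe (u.length + v.length),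
      (∑ t ∈ wordsLe (u.length + v.length), ((dec t).count pq) • G t)
          * (monImg R X pq.1 u * monImg R X pq.2 v)
      = (G pq.1 * G pq.2) * (monImg R X pq.1 u * monImg R X pq.2 v) := by
    intro pq hpq
    by_cases hlen : pq.1.length + pq.2.length ≤ u.length + v.length
    · congr 1
      have hcnt : ∀ t : List (Fin 2), ((dec t).count pq) = (sh pq.1 pq.2).count t :=
        fun t => dec_count t pq.1 pq.2
      rw [Finset.sum_congr rfl (fun t _ => by rw [hcnt t])]
      rw [← hG.2 pq.1 pq.2]
      conv_rhs => rw [Finset.sum_multiset_map_count]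
      symm
      apply Finset.sum_subset
      · intro t ht
        rw [Multiset.mem_toFinset] at ht
        rw [mem_wordsLe, mem_sh_length pq.1 pq.2 t ht]
        omega
      · intro t _ ht
        rw [Multiset.count_eq_zero.mpr (fun h => ht (Multiset.mem_toFinset.mpr h)), zero_smul]
    · have hz : monImg R X pq.1 u * monImg R X pq.2 v = 0 := by
        by_cases hp : pq.1.length ≤ u.length
        · rw [monImg_vanish R X hX0 pq.2 v (by omega), mul_zero]
        · rw [monImg_vanish R X hX0 pq.1 u (by omega), zero_mul]
      rw [hz, mul_zero, mul_zero]
  rw [Finset.sum_congr rfl conv2]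
  have shrink : ∀ w : List (Fin 2), w.length ≤ u.length + v.length →
      (∑ p ∈ wordsLe (u.length + v.length), G p * monImg R X p w) = subst R G X w := by
    intro w hw
    show _ = ∑ p ∈ wordsLe w.length, G p * monImg R X p w
    symm
    apply Finset.sum_subset
    · intro p hp
      rw [mem_wordsLe] at hp ⊢
      omega
    · intro p _ hp
      rw [mem_wordsLe] at hp
      rw [monImg_vanish R X hX0 p w (by omega), mul_zero]
  rw [← shrink u (by omega), ← shrink v (by omega), Finset.sum_mul_sum]
  rw [Finset.sum_product]
  refine Finset.sum_congr rfl fun p _ => Finset.sum_congr rfl fun q _ => by ring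

/-- The group-like series with constant term 1 form a group under the Ihara
action, acting simply transitively on itself: if `G, H` are group-like, the
unique `F` (invertible, constant term 1) with `F ∘ G = H` is again
group-like. -/
theorem ihara_grouplike_transitive (F Fi G H : List (Fin 2) → R)
    (hG : IsGroupLike R G) (hH : IsGroupLike R H)
    (hF1 : F [] = 1)
    (hFi : cmul R F Fi = oneS R ∧ cmul R Fi F = oneS R)
    (hFG : ihara R F Fi G = H) :
    IsGroupLike R F := by

  refine ⟨hF1, ?_⟩
  suffices main : ∀ n, ∀ u v : List (Fin 2), u.length + v.length ≤ n →
      Ssum R F u v = F u * F v by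
    intro u v
    exact main (u.length + v.length) u v le_rfl
  intro n
  induction n with
  | zero =>
    intro u v h
    have hu : u = [] := List.length_eq_zero_iff.mp (by omega)
    have hv : v = [] := List.length_eq_zero_iff.mp (by omega)
    subst hu; subst hv
    rw [Ssum_nil_left, hF1]
    norm_num
  | succ n IH =>
    intro u v hN
    -- the inverse is a character up to degree n
    obtain ⟨hFi0, hFichar⟩ := charInv R n F Fi hF1 IH hFi.1
    -- the conjugation X = F e1 F⁻¹ is primitive up to degree n+1
    have hX0 : conjE1 R F Fi [] = 0 := by
      show cmul R (cmul R F (wordS R [1])) Fi [] = 0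
      rw [cmul_nil, cmul_nil]
      simp [wordS]
    have hXprim : ∀ a b : List (Fin 2), a.length + b.length ≤ n + 1 →
        Ssum R (conjE1 R F Fi) a b
          = conjE1 R F Fi a * oneS R b + oneS R a * conjE1 R F Fi b := by
      intro a b hab
      exact primConj R n F Fi (wordS R [1]) IH hFichar hFi.1 (by simp [wordS])
        (wordS_prim R 1) a b hab
    -- hence K = G(e0, X) is a character up to degree n+1
    have hK := substChar R (n+1) G (conjE1 R F Fi) hG hX0 hXprim
    have hK0 : subst R G (conjE1 R F Fi) [] = 1 := subst_nil R G _ hG.1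
    -- the hypothesis: K · F = H is group-like
    have hH2 : ∀ u v : List (Fin 2),
        Ssum R (cmul R (subst R G (conjE1 R F Fi)) F) u v
          = cmul R (subst R G (conjE1 R F Fi)) F u
            * cmul R (subst R G (conjE1 R F Fi)) F v := by
      intro u v
      show Ssum R (ihara R F Fi G) u v = ihara R F Fi G u * ihara R F Fi G v
      rw [hFG]
      exact hH.2 u v
    -- expand both sides of hH2 at (u, v) and extract the (0,0) term
    have lhs : Ssum R (cmul R (subst R G (conjE1 R F Fi)) F) u v
        = ∑ i ∈ Finset.range (u.length + 1), ∑ j ∈ Finset.range (v.length + 1),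
            (subst R G (conjE1 R F Fi) (u.take i) * subst R G (conjE1 R F Fi) (v.take j))
              * Ssum R F (u.drop i) (v.drop j) := by
      rw [splitLemma]
      refine Finset.sum_congr rfl fun i hi => Finset.sum_congr rfl fun j hj => ?_
      simp only [Finset.mem_range] at hi hj
      rw [hK (u.take i) (v.take j) (by simp only [List.length_take]; omega)]
    have rhs : cmul R (subst R G (conjE1 R F Fi)) F u
          * cmul R (subst R G (conjE1 R F Fi)) F v
        = ∑ i ∈ Finset.range (u.length + 1), ∑ j ∈ Finset.range (v.length + 1),
            (subst R G (conjE1 R F Fi) (u.take i) * subst R G (conjE1 R F Fi) (v.take j))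
              * (F (u.drop i) * F (v.drop j)) := by
      rw [cmul, cmul, Finset.sum_mul_sum]
      refine Finset.sum_congr rfl fun i _ => Finset.sum_congr rfl fun j _ => by ring
    have h00 := extract00 R u.length v.length _ _ ?_ ((lhs.symm.trans (hH2 u v)).trans rhs)
    · simp only [List.take_zero, List.drop_zero, hK0, one_mul] at h00
      exact h00
    · intro i hi j hj hne
      simp only [Finset.mem_range] at hi hj
      congr 1
      apply IH
      simp only [List.length_drop]
      omega
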